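/- Let S be a right pseudo-finite monoid such that Green's preorder ≤_L is left compatible with multiplication (u ≤_L v implies au ≤_L av for all a). Then S has a minimal ideal which is the union of finitely many minimal left ideals. -/

import Mathlib

def seqN {α : Type*} (r : α → α → Prop) : ℕ → α → α → Prop
  | 0, a, b => a = b
  | n + 1, a, b => ∃ c, r a c ∧ seqN r n c b

/-- One step of an `X`-sequence in a monoid `S` as a right `S`-act:
`a = x * s`, `b = y * s` with `x, y ∈ X`, `s ∈ S`. -/
def mStep {S : Type*} [Monoid S] (X : Set S) (a b : S) : Prop :=
  ∃ x ∈ X, ∃ y ∈ X, ∃ s : S, a = x * s ∧ b = y * s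

/-- A monoid is right pseudo-finite if some finite `X ⊆ S` and bound `N` connect any
two elements by an `X`-sequence of length at most `N`. -/
def MRightPF (S : Type*) [Monoid S] : Prop :=
  ∃ X : Finset S, ∃ N : ℕ, ∀ a b : S, ∃ n ≤ N, seqN (mStep (X : Set S)) n a b

/-- `L` is a left ideal of `S`. -/
def IsLeftIdeal {S : Type*} [Monoid S] (L : Set S) : Prop :=
  L.Nonempty ∧ ∀ a ∈ L, ∀ s : S, s * a ∈ L

/-- `R` is a right ideal of `S`. -/
def IsRightIdeal {S : Type*} [Monoid S] (R : Set S) : Prop :=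
  R.Nonempty ∧ ∀ a ∈ R, ∀ s : S, a * s ∈ R

/-- `I` is a two-sided ideal of `S`. -/
def IsIdeal {S : Type*} [Monoid S] (I : Set S) : Prop :=
  I.Nonempty ∧ ∀ a ∈ I, ∀ s : S, s * a ∈ I ∧ a * s ∈ I

/-- `L` is a minimal left ideal: a left ideal containing no proper left ideal. -/
def IsMinLeftIdeal {S : Type*} [Monoid S] (L : Set S) : Prop :=
  IsLeftIdeal L ∧ ∀ L' ⊆ L, IsLeftIdeal L' → L' = L

/-- `R` is a minimal right ideal: a right ideal containing no proper right ideal. -/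
def IsMinRightIdeal {S : Type*} [Monoid S] (R : Set S) : Prop :=
  IsRightIdeal R ∧ ∀ R' ⊆ R, IsRightIdeal R' → R' = R

/-- `K` is the minimal ideal of `S`: an ideal contained in every ideal. -/
def IsMinIdeal {S : Type*} [Monoid S] (K : Set S) : Prop :=
  IsIdeal K ∧ ∀ I : Set S, IsIdeal I → K ⊆ I


open scoped Pointwise

/-! Left compatibility of `≤_L` lets an `X`-sequence from `1` to `b` be pushed, one step at a
time, into a product of at most `N` elements of `X` lying in `S b`. So every left ideal meets the
finite set `W` of such products, and a left ideal `S w` with `w ∈ W` that is minimal among these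
is a minimal left ideal. Every minimal left ideal is `S w` for each of its elements, hence there
are finitely many; and in any monoid the union of the minimal left ideals, when there is one, is
the minimal ideal, because right translates of minimal left ideals are again minimal. -/

section PrincipalLeftIdeal

variable {S : Type*} [Monoid S]

def principalLeftIdeal (w : S) : Set S := {t | ∃ s : S, t = s * w}

/-- Green's preorder `u ≤_L v` is `u ∈ principalLeftIdeal v`. -/
def LeLLeftCompatible (S : Type*) [Monoid S] : Prop :=
  ∀ u v a : S, u ∈ principalLeftIdeal v → a * u ∈ principalLeftIdeal (a * v)

lemma mem_principalLeftIdeal_self (w : S) : w ∈ principalLeftIdeal w := ⟨1, (one_mul w).symm⟩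

lemma isLeftIdeal_principalLeftIdeal (w : S) : IsLeftIdeal (principalLeftIdeal w) := by
  refine ⟨⟨w, mem_principalLeftIdeal_self w⟩, ?_⟩
  rintro _ ⟨s, rfl⟩ t
  exact ⟨t * s, (mul_assoc t s w).symm⟩

lemma IsLeftIdeal.principalLeftIdeal_subset {L : Set S} (hL : IsLeftIdeal L) {a : S}
    (ha : a ∈ L) : principalLeftIdeal a ⊆ L := by
  rintro _ ⟨s, rfl⟩
  exact hL.2 a ha s

namespace IsMinLeftIdeal

variable {L : Set S}

lemma eq_principalLeftIdeal (hL : IsMinLeftIdeal L) {a : S} (ha : a ∈ L) :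
    L = principalLeftIdeal a :=
  (hL.2 _ (hL.1.principalLeftIdeal_subset ha) (isLeftIdeal_principalLeftIdeal a)).symm

lemma principalLeftIdeal_mul (hL : IsMinLeftIdeal L) {a : S} (ha : a ∈ L) (s : S) :
    IsMinLeftIdeal (principalLeftIdeal (a * s)) := by
  refine ⟨isLeftIdeal_principalLeftIdeal _, fun L' hsub hL' => ?_⟩
  obtain ⟨b, hb⟩ := hL'.1
  obtain ⟨t, rfl⟩ := hsub hb
  -- `a ∈ L = S (t a)`, so `a s` is a left multiple of `b = t a s`.
  obtain ⟨u, hu⟩ : a ∈ principalLeftIdeal (t * a) :=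
    hL.eq_principalLeftIdeal (hL.1.2 a ha t) ▸ ha
  have hasL' : a * s ∈ L' := by
    rw [hu, mul_assoc, mul_assoc t]
    exact hL'.2 _ hb u
  exact hsub.antisymm (hL'.principalLeftIdeal_subset hasL')

lemma subset_of_isIdeal (hL : IsMinLeftIdeal L) {I : Set S} (hI : IsIdeal I) : L ⊆ I := by
  obtain ⟨i, hi⟩ := hI.1
  obtain ⟨a, ha⟩ := hL.1.1
  rw [hL.eq_principalLeftIdeal (hL.1.2 a ha i)]
  rintro _ ⟨s, rfl⟩
  exact (hI.2 _ (hI.2 i hi a).2 s).1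

end IsMinLeftIdeal

theorem isMinIdeal_sUnion_setOf_isMinLeftIdeal (h : ∃ L : Set S, IsMinLeftIdeal L) :
    IsMinIdeal (⋃₀ {L : Set S | IsMinLeftIdeal L}) := by
  obtain ⟨L, hL⟩ := h
  refine ⟨⟨hL.1.1.mono (Set.subset_sUnion_of_mem hL), ?_⟩, ?_⟩
  · rintro a ⟨L, hL, ha⟩ s
    exact ⟨⟨L, hL, hL.1.2 a ha s⟩,
      ⟨_, hL.principalLeftIdeal_mul ha s, mem_principalLeftIdeal_self _⟩⟩
  · exact fun I hI => Set.sUnion_subset fun L hL => IsMinLeftIdeal.subset_of_isIdeal hL hI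

section FiniteTransversal

variable {W : Set S}

lemma exists_isMinLeftIdeal_of_finite_meets (hW : W.Finite)
    (hmeet : ∀ b : S, (W ∩ principalLeftIdeal b).Nonempty) :
    ∃ L : Set S, IsMinLeftIdeal L := by
  obtain ⟨w₀, hw₀, -⟩ := hmeet 1
  obtain ⟨M, hM⟩ := (hW.image principalLeftIdeal).exists_minimal ⟨_, w₀, hw₀, rfl⟩
  obtain ⟨w, -, hwM⟩ := hM.prop
  refine ⟨M, hwM ▸ isLeftIdeal_principalLeftIdeal w, fun L' hsub hL' => ?_⟩
  obtain ⟨b, hb⟩ := hL'.1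
  obtain ⟨w', hw'W, hw'b⟩ := hmeet b
  have hw'L' : principalLeftIdeal w' ⊆ L' :=
    hL'.principalLeftIdeal_subset (hL'.principalLeftIdeal_subset hb hw'b)
  exact hsub.antisymm (hM.eq_of_le ⟨w', hw'W, rfl⟩ (hw'L'.trans hsub) ▸ hw'L')

lemma finite_setOf_isMinLeftIdeal_of_finite_meets (hW : W.Finite)
    (hmeet : ∀ b : S, (W ∩ principalLeftIdeal b).Nonempty) :
    {L : Set S | IsMinLeftIdeal L}.Finite := by
  refine (hW.image principalLeftIdeal).subset fun L hL => ?_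
  obtain ⟨b, hb⟩ := hL.1.1
  obtain ⟨w, hwW, hwb⟩ := hmeet b
  exact ⟨w, hwW, (hL.eq_principalLeftIdeal (hL.1.principalLeftIdeal_subset hb hwb)).symm⟩

end FiniteTransversal

lemma Set.Finite.pow {X : Set S} (hX : X.Finite) (n : ℕ) : (X ^ n).Finite := by
  induction n with
  | zero => exact Set.finite_one
  | succ n ih => exact pow_succ X n ▸ ih.mul hX

lemma exists_pow_mul_mem_of_seqN (hcomp : LeLLeftCompatible S) {X : Set S} {n : ℕ} :
    ∀ {a b w : S}, seqN (mStep X) n a b → w ∈ principalLeftIdeal a →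
      ∃ x ∈ X ^ n, x * w ∈ principalLeftIdeal b := by
  induction n with
  | zero =>
    rintro a b w (rfl : a = b) hw
    exact ⟨1, Set.mem_one.2 rfl, (one_mul w).symm ▸ hw⟩
  | succ n ih =>
    rintro a b w ⟨c, ⟨x, -, y, hy, s, rfl, rfl⟩, hcb⟩ ⟨u, rfl⟩
    have hyw : y * (u * (x * s)) ∈ principalLeftIdeal (y * s) :=
      hcomp _ s y ⟨u * x, (mul_assoc u x s).symm⟩
    obtain ⟨z, hz, hzb⟩ := ih hcb hyw
    exact ⟨z * y, pow_succ X n ▸ Set.mul_mem_mul hz hy, (mul_assoc z y _).symm ▸ hzb⟩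

lemma MRightPF.exists_finite_meets_principalLeftIdeal (hpf : MRightPF S)
    (hcomp : LeLLeftCompatible S) :
    ∃ W : Set S, W.Finite ∧ ∀ b : S, (W ∩ principalLeftIdeal b).Nonempty := by
  obtain ⟨X, N, hXN⟩ := hpf
  refine ⟨⋃ n ≤ N, (X : Set S) ^ n,
    (Set.finite_le_nat N).biUnion fun n _ => X.finite_toSet.pow n, fun b => ?_⟩
  obtain ⟨n, hn, hseq⟩ := hXN 1 b
  obtain ⟨x, hx, hxb⟩ := exists_pow_mul_mem_of_seqN hcomp hseq (mem_principalLeftIdeal_self 1)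
  exact ⟨x, Set.mem_biUnion hn hx, (mul_one x) ▸ hxb⟩

end PrincipalLeftIdeal

/-- If `S` is a right pseudo-finite monoid in which Green's preorder `≤_L` is left
compatible with multiplication, then `S` has a minimal ideal which is the union of
finitely many minimal left ideals. -/
theorem min_ideal_of_rightPF_leL_left_compatible {S : Type*} [Monoid S]
    (hpf : MRightPF S)
    (hcomp : ∀ u v a : S, (∃ s : S, u = s * v) → ∃ s : S, a * u = s * (a * v)) :
    ∃ K : Set S, IsMinIdeal K ∧
      ∃ (n : ℕ) (L : Fin n → Set S),
        (∀ i, IsMinLeftIdeal (L i)) ∧ K = ⋃ i, L i := by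
  obtain ⟨W, hW, hmeet⟩ := hpf.exists_finite_meets_principalLeftIdeal hcomp
  obtain ⟨n, L, -, hL⟩ := (finite_setOf_isMinLeftIdeal_of_finite_meets hW hmeet).fin_param
  refine ⟨_, isMinIdeal_sUnion_setOf_isMinLeftIdeal
    (exists_isMinLeftIdeal_of_finite_meets hW hmeet), n, L,
    fun i => hL.subset (Set.mem_range_self i), ?_⟩
  rw [← hL, Set.sUnion_range]
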